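/- arXiv:1811.11109 — 5 statements merged into one kernel-verified Lean document; each statement's English description precedes it below -/
import Mathlib

section
/- Let G be a group acting on a set M and H a subgroup of G whose restricted action on M is free. Let g₁, g₂ ∈ G and m₁, m₂ ∈ M with m₁ in the H-orbit of g₂ • m₂, and let h₁, h₂, k₁, k₂ ∈ H. Put g₁' = h₁ g₁ h₂⁻¹, m₁' = h₂ • m₁, g₂' = k₁ g₂ k₂⁻¹, m₂' = k₂ • m₂. Then m₁' lies in the H-orbit of g₂' • m₂', and g₁' * η(m₁', g₂' • m₂') * g₂' = h₁ * (g₁ * η(m₁, g₂ • m₂) * g₂) * k₂⁻¹. Consequently the pair (g₁' η(m₁', g₂' • m₂') g₂', m₂') is (H×H)-equivalent to (g₁ η(m₁, g₂ • m₂) g₂, m₂), so the multiplication [g₁, m₁][g₂, m₂] = [g₁ η(m₁, g₂ • m₂) g₂, m₂] of Proposition 7.1 is well defined on the orbit space (G × M)/(H × H). -/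
/-- Well-definedness of the multiplication
`[g₁, m₁][g₂, m₂] = [g₁ η(m₁, g₂ • m₂) g₂, m₂]` of Proposition 7.1 on the orbit
space `(G × M)/(H × H)`. -/
theorem reduced_groupoid_mul_well_defined
    {G M : Type*} [Group G] [MulAction G M] (H : Subgroup G)
    (hfree : ∀ h ∈ H, ∀ m : M, h • m = m → h = 1)
    (η : M → M → G)
    (hηmem : ∀ m m' : M, (∃ h ∈ H, m = h • m') → η m m' ∈ H)
    (hηact : ∀ m m' : M, (∃ h ∈ H, m = h • m') → m = η m m' • m')
    (g₁ g₂ : G) (m₁ m₂ : M) (h₁ h₂ k₁ k₂ : G)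
    (hh₁ : h₁ ∈ H) (hh₂ : h₂ ∈ H) (hk₁ : k₁ ∈ H) (hk₂ : k₂ ∈ H)
    (horb : ∃ h ∈ H, m₁ = h • (g₂ • m₂)) :
    (∃ h ∈ H, h₂ • m₁ = h • ((k₁ * g₂ * k₂⁻¹) • (k₂ • m₂))) ∧
    (h₁ * g₁ * h₂⁻¹) * η (h₂ • m₁) ((k₁ * g₂ * k₂⁻¹) • (k₂ • m₂)) * (k₁ * g₂ * k₂⁻¹)
      = h₁ * (g₁ * η m₁ (g₂ • m₂) * g₂) * k₂⁻¹ ∧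
    ∃ a ∈ H, ∃ b ∈ H,
      (h₁ * g₁ * h₂⁻¹) * η (h₂ • m₁) ((k₁ * g₂ * k₂⁻¹) • (k₂ • m₂)) * (k₁ * g₂ * k₂⁻¹)
        = a * (g₁ * η m₁ (g₂ • m₂) * g₂) * b⁻¹ ∧
      k₂ • m₂ = b • m₂ := by

  obtain ⟨h, hhH, hm⟩ := horb
  have hx : (k₁ * g₂ * k₂⁻¹) • (k₂ • m₂) = k₁ • (g₂ • m₂) := by
    simp [mul_smul]
  have hη := hηact m₁ (g₂ • m₂) ⟨h, hhH, hm⟩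
  have hηH := hηmem m₁ (g₂ • m₂) ⟨h, hhH, hm⟩
  set e := η m₁ (g₂ • m₂) with he
  have hcand : h₂ * e * k₁⁻¹ ∈ H := mul_mem (mul_mem hh₂ hηH) (inv_mem hk₁)
  have horb' : ∃ h' ∈ H, h₂ • m₁ = h' • ((k₁ * g₂ * k₂⁻¹) • (k₂ • m₂)) := by
    refine ⟨h₂ * e * k₁⁻¹, hcand, ?_⟩
    rw [hx]
    conv_lhs => rw [hη]
    simp [mul_smul]
  have hη' := hηact (h₂ • m₁) ((k₁ * g₂ * k₂⁻¹) • (k₂ • m₂)) horb'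
  have hη'H := hηmem (h₂ • m₁) ((k₁ * g₂ * k₂⁻¹) • (k₂ • m₂)) horb'
  set e' := η (h₂ • m₁) ((k₁ * g₂ * k₂⁻¹) • (k₂ • m₂)) with he'
  obtain ⟨h', hh'H, hm'⟩ := horb'
  -- e' = h₂ * e * k₁⁻¹ by freeness
  have key : e' = h₂ * e * k₁⁻¹ := by
    have h1 : e' • ((k₁ * g₂ * k₂⁻¹) • (k₂ • m₂)) = h₂ • m₁ := hη'.symm
    have h2 : (h₂ * e * k₁⁻¹) • ((k₁ * g₂ * k₂⁻¹) • (k₂ • m₂)) = h₂ • m₁ := by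
      rw [hx]
      conv_rhs => rw [hη]
      simp [mul_smul]
    have h3 : ((h₂ * e * k₁⁻¹)⁻¹ * e') • ((k₁ * g₂ * k₂⁻¹) • (k₂ • m₂))
        = (k₁ * g₂ * k₂⁻¹) • (k₂ • m₂) := by
      rw [mul_smul, h1, ← h2, ← mul_smul, inv_mul_cancel, one_smul]
    have := hfree _ (mul_mem (inv_mem hcand) hη'H) _ h3
    have := eq_of_inv_mul_eq_one this
    exact this.symm
  have heq : (h₁ * g₁ * h₂⁻¹) * e' * (k₁ * g₂ * k₂⁻¹)
      = h₁ * (g₁ * e * g₂) * k₂⁻¹ := by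
    rw [key]; group
  refine ⟨⟨h₂ * e * k₁⁻¹, hcand, ?_⟩, heq, h₁, hh₁, k₂, hk₂, by rw [heq], rfl⟩
  rw [hx]
  conv_lhs => rw [hη]
  simp [mul_smul]
end

section
/- Let G be a group acting on a set M and H a subgroup of G whose restricted action on M is free. Let g₁, g₂, g₃ ∈ G and m₁, m₂, m₃ ∈ M with m₂ in the H-orbit of g₃ • m₃ and m₁ in the H-orbit of g₂ • m₂. Write u = g₂ * η(m₂, g₃ • m₃) * g₃. Then u • m₃ = g₂ • m₂ (so m₁ lies in the H-orbit of u • m₃), and g₁ * η(m₁, u • m₃) * u = (g₁ * η(m₁, g₂ • m₂) * g₂) * η(m₂, g₃ • m₃) * g₃. In particular, the multiplication [g₁, m₁][g₂, m₂] = [g₁ η(m₁, g₂ • m₂) g₂, m₂] of the reduced groupoid of Proposition 7.1 is associative. -/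
/-- Associativity of the multiplication of the reduced groupoid of
Proposition 7.1. -/
theorem reduced_groupoid_mul_assoc
    {G M : Type*} [Group G] [MulAction G M] (H : Subgroup G)
    (hfree : ∀ h ∈ H, ∀ m : M, h • m = m → h = 1)
    (η : M → M → G)
    (hηmem : ∀ m m' : M, (∃ h ∈ H, m = h • m') → η m m' ∈ H)
    (hηact : ∀ m m' : M, (∃ h ∈ H, m = h • m') → m = η m m' • m')
    (g₁ g₂ g₃ : G) (m₁ m₂ m₃ : M)
    (horb₂₃ : ∃ h ∈ H, m₂ = h • (g₃ • m₃))
    (horb₁₂ : ∃ h ∈ H, m₁ = h • (g₂ • m₂))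
    (u : G) (hu : u = g₂ * η m₂ (g₃ • m₃) * g₃) :
    u • m₃ = g₂ • m₂ ∧
    g₁ * η m₁ (u • m₃) * u
      = (g₁ * η m₁ (g₂ • m₂) * g₂) * η m₂ (g₃ • m₃) * g₃ := by
  have h1 : u • m₃ = g₂ • m₂ := by
    rw [hu, mul_smul, mul_smul, ← hηact m₂ (g₃ • m₃) horb₂₃]
  refine ⟨h1, ?_⟩
  rw [h1, hu]
  group
end

section
/- Let G be a group acting freely on a set M (g • m = m implies g = 1) and let H be a subgroup of G. Let H × H act on G × M by (h₁, h₂) • (g, m) = (h₁ g h₂⁻¹, h₂ • m). Then the map G × M → (M/H) × (M/H) sending (g, m) to (the H-orbit of g • m, the H-orbit of m) is constant on (H×H)-orbits and induces a bijection from the orbit space (G × M)/(H × H) onto the fibre product {(x, y) ∈ M/H × M/H : x and y have the same image in the orbit space M/G}. (This identifies the H-reduced groupoid of a free action with the relative pair groupoid of M/H → M/G, Example of Section 7.2.) -/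
/-- The orbit relation of the restricted action of a subgroup `H ≤ G` on `M`. -/
def hOrbitRel {G : Type*} [Group G] (H : Subgroup G) (M : Type*) [MulAction G M] :
    M → M → Prop :=
  fun m m' => ∃ h ∈ H, m' = h • m

/-- The orbit relation of the `G`-action on `M`. -/
def gOrbitRel (G : Type*) [Group G] (M : Type*) [MulAction G M] :
    M → M → Prop :=
  fun m m' => ∃ g : G, m' = g • m

/-- The `(H × H)`-action relation on `G × M`:
`(h₁, h₂) • (g, m) = (h₁ g h₂⁻¹, h₂ • m)`. -/
def reducedRel {G : Type*} [Group G] (H : Subgroup G) (M : Type*) [MulAction G M] :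
    G × M → G × M → Prop :=
  fun p q => ∃ h₁ ∈ H, ∃ h₂ ∈ H, q = (h₁ * p.1 * h₂⁻¹, h₂ • p.2)

lemma hOrbitRel_equiv {G : Type*} [Group G] (H : Subgroup G) (M : Type*) [MulAction G M] :
    Equivalence (hOrbitRel H M) := by
  constructor
  · intro m; exact ⟨1, H.one_mem, (one_smul _ _).symm⟩
  · rintro m m' ⟨h, hh, rfl⟩
    exact ⟨h⁻¹, H.inv_mem hh, (inv_smul_smul h m).symm⟩
  · rintro a b c ⟨h, hh, rfl⟩ ⟨h', hh', rfl⟩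
    exact ⟨h' * h, H.mul_mem hh' hh, (mul_smul _ _ _).symm⟩

lemma gOrbitRel_equiv (G : Type*) [Group G] (M : Type*) [MulAction G M] :
    Equivalence (gOrbitRel G M) := by
  constructor
  · intro m; exact ⟨1, (one_smul _ _).symm⟩
  · rintro m m' ⟨g, rfl⟩; exact ⟨g⁻¹, (inv_smul_smul g m).symm⟩
  · rintro a b c ⟨g, rfl⟩ ⟨g', rfl⟩; exact ⟨g' * g, (mul_smul _ _ _).symm⟩

/-- For a free `G`-action, the `H`-reduced groupoid is the relative pair
groupoid of `M/H → M/G` (Example of Section 7.2): the map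
`(g, m) ↦ (H(g • m), Hm)` is constant on `(H × H)`-orbits and induces a
bijection from `(G × M)/(H × H)` onto the fibre product
`{(x, y) ∈ M/H × M/H : x and y have the same image in M/G}`. -/
theorem reduced_groupoid_of_free_action
    {G M : Type*} [Group G] [MulAction G M] (H : Subgroup G)
    (hfree : ∀ (g : G) (m : M), g • m = m → g = 1) :
    ∃ π : Quot (hOrbitRel H M) → Quot (gOrbitRel G M),
      (∀ m : M, π (Quot.mk (hOrbitRel H M) m) = Quot.mk (gOrbitRel G M) m) ∧
      (∀ p q : G × M, reducedRel H M p q →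
        (Quot.mk (hOrbitRel H M) (q.1 • q.2), Quot.mk (hOrbitRel H M) q.2)
          = (Quot.mk (hOrbitRel H M) (p.1 • p.2), Quot.mk (hOrbitRel H M) p.2)) ∧
      ∃ e : Quot (reducedRel H M) ≃
          {x : Quot (hOrbitRel H M) × Quot (hOrbitRel H M) // π x.1 = π x.2},
        ∀ (g : G) (m : M),
          (e (Quot.mk (reducedRel H M) (g, m))).val
            = (Quot.mk (hOrbitRel H M) (g • m), Quot.mk (hOrbitRel H M) m) := by
  classical
  have hHeq := hOrbitRel_equiv H M
  have hGeq := gOrbitRel_equiv G M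
  -- extraction lemmas from quotient equalities
  have hHex : ∀ m m' : M, Quot.mk (hOrbitRel H M) m = Quot.mk (hOrbitRel H M) m' →
      hOrbitRel H M m m' := fun m m' h =>
    (Equivalence.eqvGen_iff hHeq).mp (Quot.eq.mp h)
  have hGex : ∀ m m' : M, Quot.mk (gOrbitRel G M) m = Quot.mk (gOrbitRel G M) m' →
      gOrbitRel G M m m' := fun m m' h =>
    (Equivalence.eqvGen_iff hGeq).mp (Quot.eq.mp h)
  refine ⟨Quot.lift (fun m => Quot.mk (gOrbitRel G M) m) ?_, fun m => rfl, ?_, ?_⟩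
  · rintro m m' ⟨h, _, rfl⟩
    exact Quot.sound ⟨h, rfl⟩
  · rintro p q ⟨h₁, hh₁, h₂, hh₂, rfl⟩
    refine Prod.ext ?_ ?_
    · apply Quot.sound
      refine (hHeq.symm ⟨h₁, hh₁, ?_⟩)
      simp [mul_smul]
    · exact Quot.sound (hHeq.symm ⟨h₂, hh₂, rfl⟩)
  · -- the map to the fibre product
    set π := Quot.lift (fun m => Quot.mk (gOrbitRel G M) m)
      (fun m m' (h : hOrbitRel H M m m') => by
        obtain ⟨h, _, rfl⟩ := h; exact Quot.sound ⟨h, rfl⟩) with hπ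
    have hmem : ∀ p : G × M,
        π (Quot.mk (hOrbitRel H M) (p.1 • p.2)) = π (Quot.mk (hOrbitRel H M) p.2) := by
      intro p
      exact (Quot.sound (⟨p.1, rfl⟩ : gOrbitRel G M p.2 (p.1 • p.2))).symm
    let F : G × M → {x : Quot (hOrbitRel H M) × Quot (hOrbitRel H M) // π x.1 = π x.2} :=
      fun p => ⟨(Quot.mk _ (p.1 • p.2), Quot.mk _ p.2), hmem p⟩
    have hFconst : ∀ p q : G × M, reducedRel H M p q → F p = F q := by
      rintro p q ⟨h₁, hh₁, h₂, hh₂, rfl⟩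
      refine Subtype.ext (Prod.ext ?_ ?_)
      · apply Quot.sound
        refine ⟨h₁, hh₁, ?_⟩
        simp [mul_smul]
      · exact Quot.sound ⟨h₂, hh₂, rfl⟩
    let Fbar : Quot (reducedRel H M) →
        {x : Quot (hOrbitRel H M) × Quot (hOrbitRel H M) // π x.1 = π x.2} :=
      Quot.lift F hFconst
    have hbij : Function.Bijective Fbar := by
      constructor
      · intro a b
        induction a using Quot.ind with | _ p =>
        induction b using Quot.ind with | _ q =>
        intro hFpq
        have hFpq' : F p = F q := hFpq
        have h1 : Quot.mk (hOrbitRel H M) (p.1 • p.2) = Quot.mk (hOrbitRel H M) (q.1 • q.2) :=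
          congrArg Prod.fst (congrArg Subtype.val hFpq')
        have h2 : Quot.mk (hOrbitRel H M) p.2 = Quot.mk (hOrbitRel H M) q.2 :=
          congrArg Prod.snd (congrArg Subtype.val hFpq')
        obtain ⟨h₁, hh₁, e1⟩ := hHex _ _ h1
        obtain ⟨h₂, hh₂, e2⟩ := hHex _ _ h2
        apply Quot.sound
        refine ⟨h₁, hh₁, h₂, hh₂, ?_⟩
        have key : (q.1 * h₂) • p.2 = (h₁ * p.1) • p.2 := by
          rw [mul_smul, mul_smul, ← e2, ← e1]
        have : ((h₁ * p.1)⁻¹ * (q.1 * h₂)) • p.2 = p.2 := by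
          rw [mul_smul, key, ← mul_smul, inv_mul_cancel, one_smul]
        have hq1 : q.1 * h₂ = h₁ * p.1 := by
          have := hfree _ _ this
          rw [inv_mul_eq_one] at this
          exact this.symm
        have : q.1 = h₁ * p.1 * h₂⁻¹ := by
          rw [eq_mul_inv_iff_mul_eq, hq1]
        exact Prod.ext this e2
      · rintro ⟨⟨x, y⟩, hxy⟩
        induction x using Quot.ind with | _ m₁ =>
        induction y using Quot.ind with | _ m₂ =>
        obtain ⟨g, hg⟩ := hGex m₁ m₂ hxy
        refine ⟨Quot.mk _ (g⁻¹, m₂), ?_⟩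
        show F (g⁻¹, m₂) = ⟨(Quot.mk (hOrbitRel H M) m₁, Quot.mk (hOrbitRel H M) m₂), hxy⟩
        refine Subtype.ext (Prod.ext ?_ rfl)
        show Quot.mk (hOrbitRel H M) (g⁻¹ • m₂) = Quot.mk (hOrbitRel H M) m₁
        rw [hg, inv_smul_smul]
    refine ⟨Equiv.ofBijective Fbar hbij, fun g m => ?_⟩
    have t1 : Fbar (Quot.mk (reducedRel H M) (g, m)) = F (g, m) := rfl
    have t2 : (Equiv.ofBijective Fbar hbij) (Quot.mk (reducedRel H M) (g, m))
        = Fbar (Quot.mk (reducedRel H M) (g, m)) := rfl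
    have t3 : (F (g, m)).val
        = (Quot.mk (hOrbitRel H M) (g • m), Quot.mk (hOrbitRel H M) m) := rfl
    rw [t2, t1, t3]
end

section
/- Let ω be an alternating bilinear form on a real vector space V and W ⊆ V a subspace. Then W is lagrangian (W = W^⊥) if and only if there exist a subspace S complementary to the characteristic subspace V^⊥ (S ∩ V^⊥ = 0, S + V^⊥ = V) and a subspace L ⊆ S with W = V^⊥ + L and L = L^⊥ ∩ S. In other words, a subspace is lagrangian if and only if it is the sum of the characteristic subspace and a lagrangian subspace of a symplectic complement. -/
/-- The presymplectic orthogonal `W^⊥ = {v : ∀ w ∈ W, ω v w = 0}` of a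
subspace `W` with respect to a bilinear form `ω`. -/
def presympPerp {V : Type*} [AddCommGroup V] [Module ℝ V]
    (ω : V →ₗ[ℝ] V →ₗ[ℝ] ℝ) (W : Submodule ℝ V) : Submodule ℝ V where
  carrier := {v | ∀ w ∈ W, ω v w = 0}
  zero_mem' := by
    intro w _
    simp
  add_mem' := by
    intro a b ha hb w hw
    simp [ha w hw, hb w hw]
  smul_mem' := by
    intro c v hv w hw
    simp [hv w hw]

section Aux

variable {V : Type*} [AddCommGroup V] [Module ℝ V] (ω : V →ₗ[ℝ] V →ₗ[ℝ] ℝ)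

lemma mem_presympPerp {W : Submodule ℝ V} {v : V} :
    v ∈ presympPerp ω W ↔ ∀ w ∈ W, ω v w = 0 := Iff.rfl

lemma presympPerp_anti {A B : Submodule ℝ V} (h : A ≤ B) :
    presympPerp ω B ≤ presympPerp ω A :=
  fun _ hv w hw => hv w (h hw)

lemma presympPerp_sup (A B : Submodule ℝ V) :
    presympPerp ω (A ⊔ B) = presympPerp ω A ⊓ presympPerp ω B := by
  refine le_antisymm
    (le_inf (presympPerp_anti ω le_sup_left) (presympPerp_anti ω le_sup_right)) ?_
  rintro v ⟨hA, hB⟩ w hw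
  obtain ⟨a, ha, b, hb, rfl⟩ := Submodule.mem_sup.1 hw
  simp [hA a ha, hB b hb]

lemma skew (halt : ∀ v : V, ω v v = 0) (v w : V) : ω v w = - ω w v := by
  have h := halt (v + w)
  have h1 := halt v
  have h2 := halt w
  simp only [map_add, LinearMap.add_apply] at h
  linarith

/-- Everything is perpendicular to the radical. -/
lemma presympPerp_radical (halt : ∀ v : V, ω v v = 0) :
    presympPerp ω (presympPerp ω (⊤ : Submodule ℝ V)) = ⊤ := by
  rw [eq_top_iff]
  intro v _ r hr
  rw [skew ω halt]
  simpa using hr v (Submodule.mem_top)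

end Aux

/-- A subspace is lagrangian (`W = W^⊥`) if and only if it is the sum of the
characteristic subspace `V^⊥` and a lagrangian subspace of a symplectic
complement of `V^⊥`. -/
theorem lagrangian_iff_sum_characteristic_lagrangian
    {V : Type*} [AddCommGroup V] [Module ℝ V]
    (ω : V →ₗ[ℝ] V →ₗ[ℝ] ℝ) (halt : ∀ v : V, ω v v = 0)
    (W : Submodule ℝ V) :
    W = presympPerp ω W ↔
      ∃ S : Submodule ℝ V,
        (S ⊓ presympPerp ω (⊤ : Submodule ℝ V) = ⊥ ∧
          S ⊔ presympPerp ω (⊤ : Submodule ℝ V) = ⊤) ∧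
        ∃ L : Submodule ℝ V, L ≤ S ∧
          W = presympPerp ω (⊤ : Submodule ℝ V) ⊔ L ∧
          L = presympPerp ω L ⊓ S := by
  set R := presympPerp ω (⊤ : Submodule ℝ V) with hR
  constructor
  · intro h
    -- R ≤ W
    have hRW : R ≤ W := by
      rw [h]; exact presympPerp_anti ω le_top
    -- complement L of R inside W
    obtain ⟨L', hL'⟩ := Submodule.exists_isCompl (R.comap W.subtype)
    set L : Submodule ℝ V := L'.map W.subtype with hLdef
    have hLW : L ≤ W := by
      rw [hLdef]
      rintro v ⟨x, _, rfl⟩; exact x.2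
    have hmapR : (R.comap W.subtype).map W.subtype = R := by
      rw [Submodule.map_comap_subtype, inf_eq_right.2 hRW]
    have hLRsup : R ⊔ L = W := by
      rw [hLdef, ← hmapR, ← Submodule.map_sup, hL'.sup_eq_top,
        Submodule.map_top, Submodule.range_subtype]
    have hLRinf : L ⊓ R = ⊥ := by
      rw [hLdef, ← hmapR, ← Submodule.map_inf _ W.injective_subtype, hL'.symm.inf_eq_bot,
        Submodule.map_bot]
    -- extend L to a complement S of R
    obtain ⟨M, hM⟩ := Submodule.exists_isCompl (L ⊔ R)
    set S : Submodule ℝ V := L ⊔ M with hSdef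
    have hSRinf : S ⊓ R = ⊥ := by
      rw [eq_bot_iff]
      rintro v ⟨hvS, hvR⟩
      obtain ⟨l, hl, m, hm, rfl⟩ := Submodule.mem_sup.1 hvS
      have hmem : m ∈ (L ⊔ R) ⊓ M := by
        constructor
        · have : m = (l + m) - l := by abel
          rw [this]
          exact Submodule.sub_mem _ (Submodule.mem_sup_right hvR)
            (Submodule.mem_sup_left hl)
        · exact hm
      rw [hM.inf_eq_bot] at hmem
      simp only [Submodule.mem_bot] at hmem
      subst hmem
      have : l + 0 ∈ L ⊓ R := ⟨by simpa using hl, hvR⟩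
      rw [hLRinf] at this
      simpa using this
    have hSRsup : S ⊔ R = ⊤ := by
      rw [hSdef, sup_right_comm, hM.sup_eq_top]
    -- perp L = W
    have hperpL : presympPerp ω L = W := by
      have : presympPerp ω W = presympPerp ω L := by
        rw [← hLRsup, presympPerp_sup, hR, presympPerp_radical ω halt, top_inf_eq]
      rw [← this, ← h]
    refine ⟨S, ⟨hSRinf, hSRsup⟩, L, le_sup_left, hLRsup.symm, ?_⟩
    refine le_antisymm (le_inf ?_ le_sup_left) ?_
    · calc L ≤ W := hLW
        _ = presympPerp ω W := h
        _ ≤ presympPerp ω L := presympPerp_anti ω hLW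
    · rw [hperpL, ← hLRsup]
      rintro v ⟨hvW, hvS⟩
      obtain ⟨r, hr, l, hl, rfl⟩ := Submodule.mem_sup.1 hvW
      have hmem : r ∈ S ⊓ R := by
        refine ⟨?_, hr⟩
        have : r = (r + l) - l := by abel
        rw [this]
        exact Submodule.sub_mem _ hvS (le_sup_left (a := L) (b := M) hl)
      rw [hSRinf] at hmem
      simp only [Submodule.mem_bot] at hmem
      subst hmem
      simpa using hl
  · rintro ⟨S, ⟨hSRinf, hSRsup⟩, L, hLS, rfl, hL⟩
    have hRperpL : R ≤ presympPerp ω L := by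
      rw [hR]; exact presympPerp_anti ω le_top
    have hLperpL : L ≤ presympPerp ω L := hL.le.trans inf_le_left
    rw [presympPerp_sup, hR, presympPerp_radical ω halt, top_inf_eq]
    refine le_antisymm (sup_le hRperpL hLperpL) ?_
    intro v hv
    obtain ⟨s, hs, r, hr, rfl⟩ := Submodule.mem_sup.1 (hSRsup ▸ Submodule.mem_top (x := v))
    have hsL : s ∈ L := by
      rw [hL]
      refine ⟨?_, hs⟩
      have : s = (s + r) - r := by abel
      rw [this]
      exact Submodule.sub_mem _ hv (hRperpL hr)
    exact Submodule.add_mem _ (Submodule.mem_sup_right hsL) (Submodule.mem_sup_left hr)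
end

section
/- Let f : ℝ × ℝ → ℝ be differentiable, 2π-periodic in its first variable (f(φ + 2π, z) = f(φ, z) for all φ, z), and suppose that ∂f/∂φ(φ, z) − z · ∂f/∂z(φ, z) = f(φ, z) for all (φ, z) ∈ ℝ × ℝ. Then f is identically zero. -/
open Real Filter Topology

/-!
Along the characteristic curves `t ↦ (φ + t, z e^{-t})` of the vector field `∂_φ − z ∂_z`
the equation says `d/dt f = f`, so `e^{-t} f(φ + t, z e^{-t}) = f(φ, z)`. Taking `t = 2πn` and
using periodicity, `f(φ, z) = e^{-2πn} f(φ, z e^{-2πn}) → 0 · f(φ, 0) = 0`.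
-/

lemma hasDerivAt_characteristic (φ z t : ℝ) :
    HasDerivAt (fun s => (φ + s, z * exp (-s))) (1, -(z * exp (-t))) t := by
  refine ((hasDerivAt_id t).const_add φ).prodMk ?_
  simpa using ((hasDerivAt_neg t).exp).const_mul z

section Characteristic

variable {f : ℝ × ℝ → ℝ} (hf : Differentiable ℝ f)
  (hpde : ∀ p : ℝ × ℝ, fderiv ℝ f p (1, 0) - p.2 * fderiv ℝ f p (0, 1) = f p)
include hf hpde

lemma hasDerivAt_comp_characteristic (φ z t : ℝ) :
    HasDerivAt (fun s => f (φ + s, z * exp (-s))) (f (φ + t, z * exp (-t))) t := by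
  refine ((hf _).hasFDerivAt.comp_hasDerivAt t (hasDerivAt_characteristic φ z t)).congr_deriv ?_
  have hsplit : ((1 : ℝ), -(z * exp (-t))) = (1, 0) + (-(z * exp (-t))) • (0, 1) := by simp
  rw [hsplit, map_add, map_smul, smul_eq_mul, ← hpde]
  ring

lemma comp_characteristic_mul_exp_neg (φ z t : ℝ) :
    f (φ + t, z * exp (-t)) * exp (-t) = f (φ, z) := by
  have hderiv (s : ℝ) : HasDerivAt (fun s => f (φ + s, z * exp (-s)) * exp (-s)) 0 s :=
    ((hasDerivAt_comp_characteristic hf hpde φ z s).mul (hasDerivAt_neg s).exp).congr_deriv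
      (by ring)
  simpa using is_const_of_deriv_eq_zero (fun s => (hderiv s).differentiableAt)
    (fun s => (hderiv s).deriv) t 0

end Characteristic

lemma tendsto_comp_mul_exp_neg_mul_exp_neg {g : ℝ → ℝ} (hg : ContinuousAt g 0) (z : ℝ) :
    Tendsto (fun t => g (z * exp (-t)) * exp (-t)) atTop (𝓝 0) := by
  have hexp : Tendsto (fun t => exp (-t)) atTop (𝓝 0) := tendsto_exp_neg_atTop_nhds_zero
  have hg' : Tendsto (fun t => g (z * exp (-t))) atTop (𝓝 (g 0)) :=
    hg.tendsto.comp (by simpa using hexp.const_mul z)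
  simpa using hg'.mul hexp

/-- A differentiable function `f(φ, z)` which is `2π`-periodic in `φ` and
satisfies `∂f/∂φ − z ∂f/∂z = f` vanishes identically (the Remark following
Example 2.9). -/
theorem cylinder_no_symplectic_section
    (f : ℝ × ℝ → ℝ) (hdiff : Differentiable ℝ f)
    (hper : ∀ φ z : ℝ, f (φ + 2 * Real.pi, z) = f (φ, z))
    (hpde : ∀ p : ℝ × ℝ,
      fderiv ℝ f p (1, 0) - p.2 * fderiv ℝ f p (0, 1) = f p) :
    ∀ p : ℝ × ℝ, f p = 0 := by
  rintro ⟨φ, z⟩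
  have hperiodic (w : ℝ) : Function.Periodic (fun φ => f (φ, w)) (2 * π) := fun φ => hper φ w
  have hconst (n : ℕ) :
      f (φ, z * exp (-(n * (2 * π)))) * exp (-(n * (2 * π))) = f (φ, z) := by
    rw [← comp_characteristic_mul_exp_neg hdiff hpde φ z (n * (2 * π))]
    congr 1
    exact ((hperiodic _).nat_mul n φ).symm
  have hlim := (tendsto_comp_mul_exp_neg_mul_exp_neg
    (hdiff.continuous.comp (Continuous.prodMk_right φ)).continuousAt z).comp
    (tendsto_natCast_atTop_atTop.atTop_mul_const (by positivity : (0 : ℝ) < 2 * π))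
  refine tendsto_nhds_unique ?_ hlim
  simp only [Function.comp_def, hconst]
  exact tendsto_const_nhds
end
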